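/- For an ordinary commutative Hopf algebra A (with trivial braiding the flip), the map R : A⊗A → A⊗A defined by R(α ⊗ β) = β⁽²⁾ ⊗ α S(β⁽¹⁾) β⁽³⁾ (Sweedler notation) is invertible with inverse R⁻¹(α ⊗ β) = α⁽¹⁾ S(α⁽³⁾) β ⊗ α⁽²⁾. -/

import Mathlib

open TensorProduct LinearMap Coalgebra

noncomputable section

set_option maxHeartbeats 1000000

variable (k A : Type*) [Field k] [CommRing A] [HopfAlgebra k A]

/-- The map A ⊗ (A ⊗ A) → A ⊗ A, x ⊗ (y ⊗ z) ↦ y ⊗ (x·z). -/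
def gAux : A ⊗[k] (A ⊗[k] A) →ₗ[k] A ⊗[k] A :=
  lTensor A (LinearMap.mul' k A) ∘ₗ (TensorProduct.assoc k A A A).toLinearMap ∘ₗ
    rTensor A (TensorProduct.comm k A A).toLinearMap ∘ₗ
    (TensorProduct.assoc k A A A).symm.toLinearMap

/-- The map R : A ⊗ A → A ⊗ A, α ⊗ β ↦ β⁽²⁾ ⊗ α·S(β⁽¹⁾)·β⁽³⁾ (Sweedler notation). -/
def Rmap : A ⊗[k] A →ₗ[k] A ⊗[k] A :=
  gAux k A ∘ₗ lTensor A (gAux k A) ∘ₗ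
    lTensor A (rTensor (A ⊗[k] A) (HopfAlgebra.antipode (R := k))) ∘ₗ
    lTensor A (lTensor A (comul (R := k) (A := A)) ∘ₗ comul)

/-- The map R⁻¹ : A ⊗ A → A ⊗ A, α ⊗ β ↦ α⁽¹⁾·S(α⁽³⁾)·β ⊗ α⁽²⁾ (Sweedler notation). -/
def RmapInv : A ⊗[k] A →ₗ[k] A ⊗[k] A :=
  ((TensorProduct.comm k A A).toLinearMap ∘ₗ gAux k A) ∘ₗ
    lTensor A (lTensor A (LinearMap.mul' k A)) ∘ₗ
    lTensor A (TensorProduct.assoc k A A A).toLinearMap ∘ₗ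
    (TensorProduct.assoc k A (A ⊗[k] A) A).toLinearMap ∘ₗ
    rTensor A (lTensor A (lTensor A (HopfAlgebra.antipode (R := k))) ∘ₗ
      lTensor A (comul (R := k) (A := A)) ∘ₗ comul)

section ConvAux

variable {K B : Type*} [Field K] [CommRing B] [HopfAlgebra K B]

/-- Convolution product on linear maps `B →ₗ[K] B ⊗ B`. -/
def conv (f g : B →ₗ[K] B ⊗[K] B) : B →ₗ[K] B ⊗[K] B :=
  LinearMap.mul' K (B ⊗[K] B) ∘ₗ TensorProduct.map f g ∘ₗ comul

lemma conv_repr (f g : B →ₗ[K] B ⊗[K] B) {a : B} (r : Coalgebra.Repr K a (B × B)) :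
    conv f g a = ∑ i ∈ r.index, f (r.left i) * g (r.right i) := by
  simp only [conv, comp_apply, ← r.eq, map_sum, TensorProduct.map_tmul, mul'_apply]

/-- The convolution unit. -/
def cunit : B →ₗ[K] B ⊗[K] B := Algebra.linearMap K (B ⊗[K] B) ∘ₗ counit

def inl' : B →ₗ[K] B ⊗[K] B := (TensorProduct.mk K B B).flip 1

def inr' : B →ₗ[K] B ⊗[K] B := TensorProduct.mk K B B 1

@[simp] lemma inl'_apply (a : B) : (inl' : B →ₗ[K] B ⊗[K] B) a = a ⊗ₜ 1 := rfl
@[simp] lemma inr'_apply (a : B) : (inr' : B →ₗ[K] B ⊗[K] B) a = 1 ⊗ₜ a := rfl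

lemma sum_counit_smul {a : B} (r : Coalgebra.Repr K a (B × B)) :
    ∑ i ∈ r.index, counit (R := K) (r.left i) • r.right i = a := by
  have := congrArg (TensorProduct.lid K B) (sum_counit_tmul_eq r)
  simp only [map_sum, TensorProduct.lid_tmul, one_smul] at this
  exact this

lemma sum_smul_counit {a : B} (r : Coalgebra.Repr K a (B × B)) :
    ∑ i ∈ r.index, counit (R := K) (r.right i) • r.left i = a := by
  have := congrArg (TensorProduct.rid K B) (sum_tmul_counit_eq r)
  simp only [map_sum, TensorProduct.rid_tmul, one_smul] at this
  exact this

lemma conv_unit_left (f : B →ₗ[K] B ⊗[K] B) : conv cunit f = f := by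
  ext a
  have r := Coalgebra.Repr.arbitrary K a
  rw [conv_repr _ _ r]
  have : ∀ i ∈ r.index, cunit (r.left i) * f (r.right i)
      = f (counit (R := K) (r.left i) • r.right i) := by
    intro i _
    rw [map_smul]
    simp only [cunit, comp_apply, Algebra.linearMap_apply]
    rw [← Algebra.smul_def]
  rw [Finset.sum_congr rfl this, ← map_sum, _root_.sum_counit_smul r]

lemma conv_unit_right (f : B →ₗ[K] B ⊗[K] B) : conv f cunit = f := by
  ext a
  have r := Coalgebra.Repr.arbitrary K a
  rw [conv_repr _ _ r]
  have : ∀ i ∈ r.index, f (r.left i) * cunit (r.right i)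
      = f (counit (R := K) (r.right i) • r.left i) := by
    intro i _
    rw [map_smul]
    simp only [cunit, comp_apply, Algebra.linearMap_apply]
    rw [← Algebra.commutes, ← Algebra.smul_def]
  rw [Finset.sum_congr rfl this, ← map_sum, sum_smul_counit r]


lemma conv_assoc (f g h : B →ₗ[K] B ⊗[K] B) :
    conv (conv f g) h = conv f (conv g h) := by
  ext a
  have r := Coalgebra.Repr.arbitrary K a
  have r1 : (i : r.ι) → Coalgebra.Repr K (r.left i) (B × B) :=
    fun i => Coalgebra.Repr.arbitrary K (r.left i)
  have r2 : (i : r.ι) → Coalgebra.Repr K (r.right i) (B × B) :=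
    fun i => Coalgebra.Repr.arbitrary K (r.right i)
  rw [conv_repr _ _ r, conv_repr _ _ r]
  rw [Finset.sum_congr rfl (fun i _ => by
    rw [conv_repr f g (r1 i), Finset.sum_mul] :
    ∀ i ∈ r.index, conv f g (r.left i) * h (r.right i)
      = ∑ j ∈ (r1 i).index, f ((r1 i).left j) * g ((r1 i).right j) * h (r.right i))]
  rw [Finset.sum_congr rfl (fun i _ => by
    rw [conv_repr g h (r2 i), Finset.mul_sum] :
    ∀ i ∈ r.index, f (r.left i) * conv g h (r.right i)
      = ∑ j ∈ (r2 i).index, f (r.left i) * (g ((r2 i).left j) * h ((r2 i).right j)))]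
  have key := congrArg
    (LinearMap.mul' K (B ⊗[K] B) ∘ₗ lTensor (B ⊗[K] B) (LinearMap.mul' K (B ⊗[K] B)))
    (sum_map_tmul_tmul_eq (R := K) f g h a (repr := r) (a₁ := r1) (a₂ := r2))
  simp only [map_sum, comp_apply, lTensor_tmul, mul'_apply] at key
  simp only [mul_assoc]
  exact key.symm

lemma conv_inr_sj2 :
    conv (inr' : B →ₗ[K] B ⊗[K] B) (inr' ∘ₗ HopfAlgebra.antipode (R := K)) = cunit := by
  ext a
  have r := Coalgebra.Repr.arbitrary K a
  rw [conv_repr _ _ r]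
  simp only [comp_apply, inr'_apply, Algebra.TensorProduct.tmul_mul_tmul, one_mul,
    ← TensorProduct.tmul_sum]
  rw [HopfAlgebra.sum_mul_antipode_eq_algebraMap_counit r]
  simp only [cunit, comp_apply, Algebra.linearMap_apply,
    Algebra.TensorProduct.algebraMap_apply, Algebra.algebraMap_eq_smul_one,
    TensorProduct.tmul_smul, TensorProduct.smul_tmul']
  rw [← TensorProduct.smul_tmul', ← Algebra.TensorProduct.one_def]

lemma conv_sj1_inl :
    conv ((inl' : B →ₗ[K] B ⊗[K] B) ∘ₗ HopfAlgebra.antipode (R := K)) inl' = cunit := by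
  ext a
  have r := Coalgebra.Repr.arbitrary K a
  rw [conv_repr _ _ r]
  simp only [comp_apply, inl'_apply, Algebra.TensorProduct.tmul_mul_tmul, one_mul,
    ← TensorProduct.sum_tmul]
  rw [HopfAlgebra.sum_antipode_mul_eq_algebraMap_counit r]
  simp only [cunit, comp_apply, Algebra.linearMap_apply,
    Algebra.TensorProduct.algebraMap_apply, Algebra.algebraMap_eq_smul_one,
    TensorProduct.tmul_smul, TensorProduct.smul_tmul']
  rw [← TensorProduct.smul_tmul', ← Algebra.TensorProduct.one_def]

lemma keyG :
    conv (inr' : B →ₗ[K] B ⊗[K] B)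
      (conv (conv (inr' ∘ₗ HopfAlgebra.antipode (R := K)) (conv inl' inr'))
        (inr' ∘ₗ HopfAlgebra.antipode (R := K))) = inl' := by
  rw [conv_assoc (inr' ∘ₗ HopfAlgebra.antipode (R := K)) (conv inl' inr'),
    conv_assoc inl' inr', conv_inr_sj2, conv_unit_right,
    ← conv_assoc inr' (inr' ∘ₗ HopfAlgebra.antipode (R := K)) inl',
    conv_inr_sj2, conv_unit_left]

lemma keyH :
    conv ((inl' : B →ₗ[K] B ⊗[K] B) ∘ₗ HopfAlgebra.antipode (R := K))
      (conv (conv inl' (conv inr' (inl' ∘ₗ HopfAlgebra.antipode (R := K)))) inl') = inr' := by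
  rw [conv_assoc inl' (conv inr' (inl' ∘ₗ HopfAlgebra.antipode (R := K))),
    conv_assoc inr' (inl' ∘ₗ HopfAlgebra.antipode (R := K)) inl',
    conv_sj1_inl, conv_unit_right,
    ← conv_assoc ((inl' : B →ₗ[K] B ⊗[K] B) ∘ₗ HopfAlgebra.antipode (R := K)) inl' inr',
    conv_sj1_inl, conv_unit_left]

lemma conv4_repr (f1 f2 f3 f4 f5 : B →ₗ[K] B ⊗[K] B) {a : B} (p : Coalgebra.Repr K a (B × B))
    (q : (i : p.ι) → Coalgebra.Repr K (p.right i) (B × B))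
    (t : (i : p.ι) → (j : (q i).ι) → Coalgebra.Repr K ((q i).left j) (B × B))
    (u : (i : p.ι) → (j : (q i).ι) → (l : (t i j).ι) → Coalgebra.Repr K ((t i j).right l) (B × B)) :
    conv f1 (conv (conv f2 (conv f3 f4)) f5) a
      = ∑ i ∈ p.index, ∑ j ∈ (q i).index, ∑ l ∈ (t i j).index, ∑ m ∈ (u i j l).index,
        f1 (p.left i) * ((f2 ((t i j).left l)
          * (f3 ((u i j l).left m) * f4 ((u i j l).right m))) * f5 ((q i).right j)) := by
  rw [conv_repr _ _ p]
  refine Finset.sum_congr rfl fun i _ => ?_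
  rw [conv_repr _ _ (q i), Finset.mul_sum]
  refine Finset.sum_congr rfl fun j _ => ?_
  rw [conv_repr _ _ (t i j), Finset.sum_mul, Finset.mul_sum]
  refine Finset.sum_congr rfl fun l _ => ?_
  rw [conv_repr _ _ (u i j l), Finset.mul_sum, Finset.sum_mul, Finset.mul_sum]

end ConvAux

lemma gAux_tmul (x y z : A) : gAux k A (x ⊗ₜ (y ⊗ₜ z)) = y ⊗ₜ[k] (x * z) := by
  simp [gAux, mul'_apply]

lemma Rmap_tmul (γ δ : A) (r : Coalgebra.Repr k δ (A × A))
    (s : (i : r.ι) → Coalgebra.Repr k (r.right i) (A × A)) :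
    Rmap k A (γ ⊗ₜ δ) = ∑ i ∈ r.index, ∑ j ∈ (s i).index,
      (s i).left j ⊗ₜ[k]
        (γ * (HopfAlgebra.antipode (R := k) (r.left i) * (s i).right j)) := by
  have h1 : (lTensor A (comul (R := k) (A := A)) ∘ₗ comul) δ
      = ∑ i ∈ r.index, ∑ j ∈ (s i).index,
        r.left i ⊗ₜ[k] ((s i).left j ⊗ₜ[k] (s i).right j) := by
    simp only [comp_apply, ← r.eq, map_sum, lTensor_tmul]
    exact Finset.sum_congr rfl fun i _ => by rw [← (s i).eq, TensorProduct.tmul_sum]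
  simp only [Rmap, comp_apply, lTensor_tmul, h1]
  simp only [TensorProduct.tmul_sum, map_sum, lTensor_tmul, rTensor_tmul, gAux_tmul]

lemma RmapInv_tmul (α β : A) (p : Coalgebra.Repr k α (A × A))
    (q : (i : p.ι) → Coalgebra.Repr k (p.right i) (A × A)) :
    RmapInv k A (α ⊗ₜ β) = ∑ i ∈ p.index, ∑ j ∈ (q i).index,
      (p.left i * (HopfAlgebra.antipode (R := k) ((q i).right j) * β))
        ⊗ₜ[k] (q i).left j := by
  have h1 : (lTensor A (lTensor A (HopfAlgebra.antipode (R := k)))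
      ∘ₗ lTensor A (comul (R := k) (A := A)) ∘ₗ comul) α
      = ∑ i ∈ p.index, ∑ j ∈ (q i).index,
        p.left i ⊗ₜ[k] ((q i).left j ⊗ₜ[k]
          HopfAlgebra.antipode (R := k) ((q i).right j)) := by
    simp only [comp_apply, ← p.eq, map_sum, lTensor_tmul]
    refine Finset.sum_congr rfl fun i _ => ?_
    rw [← (q i).eq]
    simp only [map_sum, TensorProduct.tmul_sum, lTensor_tmul]
  simp only [RmapInv, comp_apply, rTensor_tmul, h1]
  simp only [TensorProduct.sum_tmul, TensorProduct.tmul_sum, map_sum, LinearEquiv.coe_coe,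
    TensorProduct.assoc_tmul, lTensor_tmul, mul'_apply, gAux_tmul,
    TensorProduct.comm_tmul]

/-- for a commutative Hopf algebra, R is invertible with inverse R⁻¹. -/
theorem Rmap_inverse :
    Rmap k A ∘ₗ RmapInv k A = LinearMap.id ∧ RmapInv k A ∘ₗ Rmap k A = LinearMap.id := by
  constructor
  · apply TensorProduct.ext'
    intro α β
    simp only [comp_apply, id_coe, id_eq]
    have p := Coalgebra.Repr.arbitrary k α
    have q : (i : p.ι) → Coalgebra.Repr k (p.right i) (A × A) :=
      fun i => Coalgebra.Repr.arbitrary k (p.right i)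
    have t : (i : p.ι) → (j : (q i).ι) → Coalgebra.Repr k ((q i).left j) (A × A) :=
      fun i j => Coalgebra.Repr.arbitrary k ((q i).left j)
    have u : (i : p.ι) → (j : (q i).ι) → (l : (t i j).ι) →
        Coalgebra.Repr k ((t i j).right l) (A × A) :=
      fun i j l => Coalgebra.Repr.arbitrary k ((t i j).right l)
    rw [RmapInv_tmul k A α β p q]
    simp only [map_sum]
    rw [Finset.sum_congr rfl (fun i _ => Finset.sum_congr rfl fun j _ =>
      Rmap_tmul k A _ _ (t i j) (u i j))]
    trans (lTensor A (LinearMap.mulRight k β))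
      (conv (inr' : A →ₗ[k] A ⊗[k] A)
        (conv (conv (inr' ∘ₗ HopfAlgebra.antipode (R := k)) (conv inl' inr'))
          (inr' ∘ₗ HopfAlgebra.antipode (R := k))) α)
    · rw [conv4_repr _ _ _ _ _ p q t u]
      simp only [map_sum]
      refine Finset.sum_congr rfl fun i _ => Finset.sum_congr rfl fun j _ =>
        Finset.sum_congr rfl fun l _ => Finset.sum_congr rfl fun m _ => ?_
      simp only [inl'_apply, inr'_apply, comp_apply,
        Algebra.TensorProduct.tmul_mul_tmul, one_mul, mul_one, lTensor_tmul,
        LinearMap.mulRight_apply]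
      exact congrArg (fun z => (u i j l).left m ⊗ₜ[k] z) (by ring)
    · rw [keyG]
      simp only [inl'_apply, lTensor_tmul, LinearMap.mulRight_apply, one_mul]
  · apply TensorProduct.ext'
    intro α β
    simp only [comp_apply, id_coe, id_eq]
    have r := Coalgebra.Repr.arbitrary k β
    have s : (i : r.ι) → Coalgebra.Repr k (r.right i) (A × A) :=
      fun i => Coalgebra.Repr.arbitrary k (r.right i)
    have t : (i : r.ι) → (j : (s i).ι) → Coalgebra.Repr k ((s i).left j) (A × A) :=
      fun i j => Coalgebra.Repr.arbitrary k ((s i).left j)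
    have u : (i : r.ι) → (j : (s i).ι) → (l : (t i j).ι) →
        Coalgebra.Repr k ((t i j).right l) (A × A) :=
      fun i j l => Coalgebra.Repr.arbitrary k ((t i j).right l)
    rw [Rmap_tmul k A α β r s]
    simp only [map_sum]
    rw [Finset.sum_congr rfl (fun i _ => Finset.sum_congr rfl fun j _ =>
      RmapInv_tmul k A _ _ (t i j) (u i j))]
    trans (rTensor A (LinearMap.mulRight k α))
      (conv ((inl' : A →ₗ[k] A ⊗[k] A) ∘ₗ HopfAlgebra.antipode (R := k))
        (conv (conv inl' (conv inr' (inl' ∘ₗ HopfAlgebra.antipode (R := k)))) inl') β)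
    · rw [conv4_repr _ _ _ _ _ r s t u]
      simp only [map_sum]
      refine Finset.sum_congr rfl fun i _ => Finset.sum_congr rfl fun j _ =>
        Finset.sum_congr rfl fun l _ => Finset.sum_congr rfl fun m _ => ?_
      simp only [inl'_apply, inr'_apply, comp_apply,
        Algebra.TensorProduct.tmul_mul_tmul, one_mul, mul_one, rTensor_tmul,
        LinearMap.mulRight_apply]
      exact congrArg (fun z => z ⊗ₜ[k] (u i j l).left m) (by ring)
    · rw [keyH]
      simp only [inr'_apply, rTensor_tmul, LinearMap.mulRight_apply, one_mul]
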